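/- Let V and W be finite types (W the set of absorbing sites), and consider configurations η : (V ⊕ W) →₀ ℕ. Let r : V × W → ℝ and define the absorption operator H on functions f : ((V ⊕ W) →₀ ℕ) → ℝ by (Hf)(η) := Σ_{i ∈ V, j ∈ W} r(i,j) · η_i · (f(η − δ_i + δ_j) − f(η)). Then H commutes with the annihilation operator 𝒜 on V ⊕ W, i.e. H∘𝒜 = 𝒜∘H; consequently, for any linear operator ℒ on functions ((V ⊕ W) →₀ ℕ) → ℝ with ℒ∘𝒜 = 𝒜∘ℒ, the absorbing extension ℒ + H also satisfies (ℒ + H)∘𝒜 = 𝒜∘(ℒ + H). -/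
import Mathlib


/-- The annihilation operator on functions of configurations. -/
noncomputable def ann {U : Type*} (f : (U →₀ ℕ) → ℝ) : (U →₀ ℕ) → ℝ :=
  fun η => ∑ x ∈ η.support, (η x : ℝ) * f (η - Finsupp.single x 1)

/-- The absorption part of the generator: particles at `i ∈ V` jump independently to
absorbing sites `j ∈ W` at rate `r(i,j)`. -/
noncomputable def absOp {V W : Type*} [Fintype V] [Fintype W] (r : V × W → ℝ)
    (f : ((V ⊕ W) →₀ ℕ) → ℝ) : ((V ⊕ W) →₀ ℕ) → ℝ :=
  fun η => ∑ i : V, ∑ j : W,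
    r (i, j) * (η (Sum.inl i) : ℝ) *
      (f (η - Finsupp.single (Sum.inl i) 1 + Finsupp.single (Sum.inr j) 1) - f η)

set_option linter.unusedSectionVars false

lemma ann_eq_univ {U : Type*} [Fintype U] (f : (U →₀ ℕ) → ℝ) (η : U →₀ ℕ) :
    ann f η = ∑ x : U, (η x : ℝ) * f (η - Finsupp.single x 1) := by
  unfold ann
  apply Finset.sum_subset (Finset.subset_univ η.support)
  intro x _ hx
  simp [Finsupp.notMem_support_iff.mp hx]

lemma sum_split {U : Type*} [Fintype U] [DecidableEq U] (g : U → ℝ) (u v : U) (huv : u ≠ v) :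
    ∑ x : U, g x = g u + g v + ∑ x ∈ Finset.univ \ {u, v}, g x := by
  rw [← Finset.sum_sdiff (Finset.subset_univ {u, v}), Finset.sum_pair huv]
  ring

section Key
variable {U : Type*} [Fintype U] [DecidableEq U]

lemma F1 (η : U →₀ ℕ) (u v x : U) (huv : u ≠ v) (hxv : x ≠ v) :
    η - Finsupp.single u 1 + Finsupp.single v 1 - Finsupp.single x 1
      = η - Finsupp.single x 1 - Finsupp.single u 1 + Finsupp.single v 1 := by
  ext y
  simp only [Finsupp.tsub_apply, Finsupp.add_apply, Finsupp.single_apply]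
  split_ifs <;> first | omega | simp_all

lemma F2 (η : U →₀ ℕ) (u v x : U) (hxu : x ≠ u) (hxv : x ≠ v) :
    (η - Finsupp.single u 1 + Finsupp.single v 1 : U →₀ ℕ) x = η x := by
  simp only [Finsupp.tsub_apply, Finsupp.add_apply, Finsupp.single_apply]
  split_ifs <;> first | omega | simp_all

lemma F3 (η : U →₀ ℕ) (u x : U) (hxu : x ≠ u) :
    (η - Finsupp.single x 1 : U →₀ ℕ) u = η u := by
  simp only [Finsupp.tsub_apply, Finsupp.single_apply]
  split_ifs <;> first | omega | simp_all

lemma F4 (η : U →₀ ℕ) (u v : U) (huv : u ≠ v) :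
    η - Finsupp.single u 1 + Finsupp.single v 1 - Finsupp.single v 1 = η - Finsupp.single u 1 := by
  ext y
  simp only [Finsupp.tsub_apply, Finsupp.add_apply, Finsupp.single_apply]
  split_ifs <;> first | omega | simp_all

lemma F6u (η : U →₀ ℕ) (u v : U) (huv : u ≠ v) :
    (η - Finsupp.single u 1 + Finsupp.single v 1 : U →₀ ℕ) u = η u - 1 := by
  simp only [Finsupp.tsub_apply, Finsupp.add_apply, Finsupp.single_apply]
  split_ifs <;> first | omega | simp_all

lemma F6v (η : U →₀ ℕ) (u v : U) (huv : u ≠ v) :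
    (η - Finsupp.single u 1 + Finsupp.single v 1 : U →₀ ℕ) v = η v + 1 := by
  simp only [Finsupp.tsub_apply, Finsupp.add_apply, Finsupp.single_apply]
  split_ifs <;> first | omega | simp_all

lemma F7 (η : U →₀ ℕ) (u : U) : (η - Finsupp.single u 1 : U →₀ ℕ) u = η u - 1 := by
  rw [Finsupp.tsub_apply, Finsupp.single_apply]
  simp

lemma F8 (η : U →₀ ℕ) (u v : U) (huv : u ≠ v) (hb : 1 ≤ η v) :
    η - Finsupp.single v 1 - Finsupp.single u 1 + Finsupp.single v 1
      = η - Finsupp.single u 1 := by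
  ext y
  simp only [Finsupp.tsub_apply, Finsupp.add_apply, Finsupp.single_apply]
  split_ifs <;> first | omega | simp_all

lemma key (f : (U →₀ ℕ) → ℝ) (η : U →₀ ℕ) (u v : U) (huv : u ≠ v) :
    (η u : ℝ) * (ann f (η - Finsupp.single u 1 + Finsupp.single v 1) - ann f η)
      = ∑ x : U, (η x : ℝ) * (((η - Finsupp.single x 1 : U →₀ ℕ) u : ℝ) *
          (f (η - Finsupp.single x 1 - Finsupp.single u 1 + Finsupp.single v 1)
            - f (η - Finsupp.single x 1))) := by
  rcases Nat.eq_zero_or_pos (η u) with h0 | hpos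
  · rw [h0, Nat.cast_zero, zero_mul]
    symm
    apply Finset.sum_eq_zero
    intro x _
    have hz : (η - Finsupp.single x 1 : U →₀ ℕ) u = 0 := by
      rw [Finsupp.tsub_apply]; omega
    rw [hz, Nat.cast_zero, zero_mul, mul_zero]
  · obtain ⟨n, hn⟩ : ∃ n, η u = n + 1 := ⟨η u - 1, by omega⟩
    set ζ := η - Finsupp.single u 1 + Finsupp.single v 1 with hζ
    rw [ann_eq_univ, ann_eq_univ, ← Finset.sum_sub_distrib, Finset.mul_sum]
    rw [sum_split (fun x => (η u : ℝ) * ((ζ x : ℝ) * f (ζ - Finsupp.single x 1)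
          - (η x : ℝ) * f (η - Finsupp.single x 1))) u v huv,
        sum_split (fun x => (η x : ℝ) * (((η - Finsupp.single x 1 : U →₀ ℕ) u : ℝ) *
          (f (η - Finsupp.single x 1 - Finsupp.single u 1 + Finsupp.single v 1)
            - f (η - Finsupp.single x 1)))) u v huv]
    have hrest : ∑ x ∈ Finset.univ \ {u, v},
        (η u : ℝ) * ((ζ x : ℝ) * f (ζ - Finsupp.single x 1)
          - (η x : ℝ) * f (η - Finsupp.single x 1))
        = ∑ x ∈ Finset.univ \ {u, v}, (η x : ℝ) * (((η - Finsupp.single x 1 : U →₀ ℕ) u : ℝ) *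
            (f (η - Finsupp.single x 1 - Finsupp.single u 1 + Finsupp.single v 1)
              - f (η - Finsupp.single x 1))) := by
      refine Finset.sum_congr rfl fun x hx => ?_
      simp only [Finset.mem_sdiff, Finset.mem_insert, Finset.mem_singleton] at hx
      have hxu : x ≠ u := fun h => hx.2 (Or.inl h)
      have hxv : x ≠ v := fun h => hx.2 (Or.inr h)
      rw [hζ, F1 η u v x huv hxv, F2 η u v x hxu hxv, F3 η u x hxu]
      ring
    rw [hrest]
    have hbound : (η u : ℝ) * ((ζ u : ℝ) * f (ζ - Finsupp.single u 1)
          - (η u : ℝ) * f (η - Finsupp.single u 1))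
        + (η u : ℝ) * ((ζ v : ℝ) * f (ζ - Finsupp.single v 1)
          - (η v : ℝ) * f (η - Finsupp.single v 1))
        = (η u : ℝ) * (((η - Finsupp.single u 1 : U →₀ ℕ) u : ℝ) *
            (f (η - Finsupp.single u 1 - Finsupp.single u 1 + Finsupp.single v 1)
              - f (η - Finsupp.single u 1)))
        + (η v : ℝ) * (((η - Finsupp.single v 1 : U →₀ ℕ) u : ℝ) *
            (f (η - Finsupp.single v 1 - Finsupp.single u 1 + Finsupp.single v 1)
              - f (η - Finsupp.single v 1))) := by
      have e1 : ζ u = n := by rw [hζ, F6u η u v huv, hn]; omega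
      have e2 : ζ v = η v + 1 := F6v η u v huv
      have e3 : ζ - Finsupp.single u 1
          = η - Finsupp.single u 1 - Finsupp.single u 1 + Finsupp.single v 1 :=
        F1 η u v u huv huv
      have e4 : ζ - Finsupp.single v 1 = η - Finsupp.single u 1 := F4 η u v huv
      have e5 : (η - Finsupp.single u 1 : U →₀ ℕ) u = n := by rw [F7, hn]; omega
      have e6 : (η - Finsupp.single v 1 : U →₀ ℕ) u = η u := F3 η u v (Ne.symm huv)
      rcases Nat.eq_zero_or_pos (η v) with hb0 | hbpos
      · rw [e1, e2, e3, e4, e5, e6, hn, hb0]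
        push_cast
        ring
      · have e7 : η - Finsupp.single v 1 - Finsupp.single u 1 + Finsupp.single v 1
            = η - Finsupp.single u 1 := F8 η u v huv hbpos
        rw [e1, e2, e3, e4, e5, e6, e7, hn]
        push_cast
        ring
    linarith
end Key

lemma ann_add {U : Type*} [Fintype U] (g h : (U →₀ ℕ) → ℝ) :
    ann (fun η => g η + h η) = fun η => ann g η + ann h η := by
  funext η
  rw [ann_eq_univ, ann_eq_univ, ann_eq_univ, ← Finset.sum_add_distrib]
  exact Finset.sum_congr rfl fun x _ => by ring

/-- **Absorbing extensions preserve consistency** (Lemma 5.2): the absorption operator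
`H` commutes with the annihilation operator; consequently, for any generator `ℒ`
commuting with `𝒜`, the absorbing extension `ℒ + H` also commutes with `𝒜`. -/
theorem stmt11 {V W : Type*} [Fintype V] [Fintype W] [DecidableEq V] [DecidableEq W]
    (r : V × W → ℝ) :
    (∀ f : ((V ⊕ W) →₀ ℕ) → ℝ, absOp r (ann f) = ann (absOp r f)) ∧
      (∀ Lc : (((V ⊕ W) →₀ ℕ) → ℝ) →ₗ[ℝ] (((V ⊕ W) →₀ ℕ) → ℝ),
        (∀ f, Lc (ann f) = ann (Lc f)) →
        ∀ f : ((V ⊕ W) →₀ ℕ) → ℝ,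
          (fun η => Lc (ann f) η + absOp r (ann f) η)
            = ann (fun η => Lc f η + absOp r f η)) := by
  have part1 : ∀ f : ((V ⊕ W) →₀ ℕ) → ℝ, absOp r (ann f) = ann (absOp r f) := by
    intro f
    funext η
    rw [ann_eq_univ]
    show ∑ i : V, ∑ j : W, _ = _
    calc ∑ i : V, ∑ j : W, r (i, j) * (η (Sum.inl i) : ℝ) *
            (ann f (η - Finsupp.single (Sum.inl i) 1 + Finsupp.single (Sum.inr j) 1) - ann f η)
        = ∑ i : V, ∑ j : W, ∑ x : V ⊕ W,
            r (i, j) * ((η x : ℝ) * (((η - Finsupp.single x 1 : (V ⊕ W) →₀ ℕ) (Sum.inl i) : ℝ) *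
              (f (η - Finsupp.single x 1 - Finsupp.single (Sum.inl i) 1
                    + Finsupp.single (Sum.inr j) 1)
                - f (η - Finsupp.single x 1)))) := by
          refine Finset.sum_congr rfl fun i _ => Finset.sum_congr rfl fun j _ => ?_
          rw [mul_assoc, key f η (Sum.inl i) (Sum.inr j) (by simp), Finset.mul_sum]
      _ = ∑ i : V, ∑ x : V ⊕ W, ∑ j : W,
            r (i, j) * ((η x : ℝ) * (((η - Finsupp.single x 1 : (V ⊕ W) →₀ ℕ) (Sum.inl i) : ℝ) *
              (f (η - Finsupp.single x 1 - Finsupp.single (Sum.inl i) 1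
                    + Finsupp.single (Sum.inr j) 1)
                - f (η - Finsupp.single x 1)))) :=
          Finset.sum_congr rfl fun i _ => Finset.sum_comm
      _ = ∑ x : V ⊕ W, ∑ i : V, ∑ j : W,
            r (i, j) * ((η x : ℝ) * (((η - Finsupp.single x 1 : (V ⊕ W) →₀ ℕ) (Sum.inl i) : ℝ) *
              (f (η - Finsupp.single x 1 - Finsupp.single (Sum.inl i) 1
                    + Finsupp.single (Sum.inr j) 1)
                - f (η - Finsupp.single x 1)))) := Finset.sum_comm
      _ = ∑ x : V ⊕ W, (η x : ℝ) * absOp r f (η - Finsupp.single x 1) := by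
          refine Finset.sum_congr rfl fun x _ => ?_
          unfold absOp
          rw [Finset.mul_sum]
          refine Finset.sum_congr rfl fun i _ => ?_
          rw [Finset.mul_sum]
          refine Finset.sum_congr rfl fun j _ => ?_
          ring
  refine ⟨part1, fun Lc hLc f => ?_⟩
  rw [ann_add, hLc f, part1 f]
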